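/- arXiv:2308.08604 — 2 statements merged into one kernel-verified Lean document; each statement's English description precedes it below -/
import Mathlib

section
/- For every n ≥ 5, the v-numbers of the cycle C_n and the path P_{n−3} satisfy v(C_n) = v(P_{n−3}) + 1. -/
open MvPolynomial

noncomputable section

/-- The `v`-number of a graded ideal `I ⊆ K[x_1,…,x_t]`: the least `k ≥ 0` such that there is a
homogeneous polynomial `f` of degree `k` with `(I : f)` an associated prime of `S/I`. -/
def vNumber {σ K : Type*} [Field K] (I : Ideal (MvPolynomial σ K)) : ℕ :=
  sInf {k : ℕ | ∃ f : MvPolynomial σ K, f.IsHomogeneous k ∧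
    Submodule.colon I (Ideal.span {f}) ∈
      associatedPrimes (MvPolynomial σ K) (MvPolynomial σ K ⧸ I)}

/-- The edge ideal of a simple graph: generated by `x_i * x_j` for edges `{x_i, x_j}`. -/
def edgeIdeal (K : Type*) [Field K] {V : Type*} (G : SimpleGraph V) :
    Ideal (MvPolynomial V K) :=
  Ideal.span {m | ∃ i j, G.Adj i j ∧ m = X i * X j}

/-- `I` is a monomial ideal: generated by a set of monomials. -/
def IsMonomialIdeal {σ K : Type*} [Field K] (I : Ideal (MvPolynomial σ K)) : Prop :=
  ∃ A : Set (σ →₀ ℕ), I = Ideal.span ((fun a => (monomial a (1 : K))) '' A)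

/-- The graded maximal ideal `𝔪 = ⟨x_1,…,x_t⟩`. -/
def maxIdeal (K : Type*) [Field K] (σ : Type*) : Ideal (MvPolynomial σ K) :=
  Ideal.span (Set.range (X : σ → MvPolynomial σ K))

/-- `α(I)`: the minimum degree of a nonzero element of `I`. -/
def alphaNumber {σ K : Type*} [Field K] (I : Ideal (MvPolynomial σ K)) : ℕ :=
  sInf {d : ℕ | ∃ f ∈ I, f ≠ 0 ∧ f.totalDegree = d}

/-- Exponent vectors of the minimal monomial generators of a monomial ideal `I`:
monomials in `I` none of whose proper divisors lies in `I`. -/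
def minimalGenerators {σ K : Type*} [Field K] (I : Ideal (MvPolynomial σ K)) :
    Set (σ →₀ ℕ) :=
  {a | (monomial a (1 : K)) ∈ I ∧
    ∀ b : σ →₀ ℕ, b ≤ a → b ≠ a → (monomial b (1 : K)) ∉ I}

/-!
If `A` is an independent set of `G` whose neighbourhood `N(A)` is a vertex cover, then
`(I(G) : x_A) = (x_v : v ∈ N(A))` is prime, so `v(I(G)) ≤ |A|`. Conversely, if `(I(G) : f)` is
prime with `f` homogeneous of degree `k`, pick a monomial `x^a` of `f` outside `I(G)`: for every
edge one of its variables `x_w` lies in the colon ideal, and `x_w x^a ∈ I(G)` forces `w` to be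
adjacent to `supp a`. So `B = supp a` has `|B| ≤ k` and `N(B)` is a vertex cover.

In a graph of maximum degree 2 the neighbourhood of one vertex meets at most 4 edges, so such a
`B` has `4|B| ≥ |E|`; taking every fourth vertex attains this bound. Hence
`v(C_n) = ⌈n/4⌉` and `v(P_k) = ⌈(k-1)/4⌉`, and `⌈n/4⌉ = ⌈(n-4)/4⌉ + 1`.
-/

namespace MvPolynomial

variable {σ R : Type*} [CommRing R] [IsDomain R]

theorem isPrime_span_X_image (s : Set σ) :
    (Ideal.span (X '' s : Set (MvPolynomial σ R))).IsPrime := by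
  classical
  let φ : MvPolynomial σ R →ₐ[R] MvPolynomial σ R := aeval fun i => if i ∈ s then 0 else X i
  have hsub : ∀ p, p - φ p ∈ Ideal.span (X '' s : Set (MvPolynomial σ R)) := by
    intro p
    induction p using MvPolynomial.induction_on with
    | C a => simp
    | add p q hp hq => simpa [add_sub_add_comm] using add_mem hp hq
    | mul_X p i hp =>
      by_cases hi : i ∈ s
      · have hXi : X i ∈ Ideal.span (X '' s : Set (MvPolynomial σ R)) :=
          Ideal.subset_span (Set.mem_image_of_mem X hi)
        simpa [φ, hi] using Ideal.mul_mem_left _ p hXi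
      · simpa [φ, hi, sub_mul] using Ideal.mul_mem_right (X i) _ hp
  have hker : RingHom.ker φ = Ideal.span (X '' s : Set (MvPolynomial σ R)) := by
    refine le_antisymm (fun p hp => by simpa [RingHom.mem_ker.mp hp] using hsub p) ?_
    rw [Ideal.span_le]
    rintro _ ⟨i, hi, rfl⟩
    simp [φ, hi]
  rw [← hker]
  exact RingHom.ker_isPrime _

end MvPolynomial

theorem Ideal.colon_span_singleton_mem_associatedPrimes_iff {R : Type*} [CommRing R]
    (I : Ideal R) (f : R) :
    I.colon (Ideal.span {f}) ∈ associatedPrimes R (R ⧸ I) ↔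
      (I.colon (Ideal.span {f})).IsPrime := by
  refine ⟨fun h => h.1, fun h => Submodule.isAssociatedPrime_def.2 ⟨h, Ideal.Quotient.mk I f, ?_⟩⟩
  have : (⊥ : Submodule R (R ⧸ I)).colon {Ideal.Quotient.mk I f} = I.colon (Ideal.span {f}) := by
    ext r
    rw [Submodule.mem_colon_singleton, Ideal.mem_colon_span_singleton, Submodule.mem_bot,
      Algebra.smul_def, Ideal.Quotient.algebraMap_eq, ← map_mul, Ideal.Quotient.eq_zero_iff_mem]
  rw [this, h.radical]

theorem Finsupp.single_one_add_single_one_le_iff {V : Type*} {i j : V} (hij : i ≠ j)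
    (m : V →₀ ℕ) : single i 1 + single j 1 ≤ m ↔ m i ≠ 0 ∧ m j ≠ 0 := by
  classical
  simp only [Finsupp.le_def, Finsupp.add_apply, Finsupp.single_apply]
  refine ⟨fun h => ⟨?_, ?_⟩, fun ⟨hi, hj⟩ v => ?_⟩
  · simpa [hij.symm, Nat.one_le_iff_ne_zero] using h i
  · simpa [hij, Nat.one_le_iff_ne_zero] using h j
  · by_cases hvi : i = v <;> by_cases hvj : j = v <;> subst_vars <;> simp_all <;> omega

namespace SimpleGraph

variable {V : Type*} (G : SimpleGraph V)

def neighborhood (A : Set V) : Set V := {v | ∃ a ∈ A, G.Adj a v}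

variable {G}

theorem mem_neighborhood_image {α : Type*} {g : α → V} {s : Set α} {v : V} :
    v ∈ G.neighborhood (g '' s) ↔ ∃ j ∈ s, G.Adj (g j) v := by
  simp [neighborhood]

theorem exists_adj_mem_union_iff {A : Set V} (hA : G.IsIndepSet A)
    (hcov : G.IsVertexCover (G.neighborhood A)) (S : Set V) :
    (∃ i j, G.Adj i j ∧ i ∈ S ∪ A ∧ j ∈ S ∪ A) ↔ ∃ v ∈ S, v ∈ G.neighborhood A := by
  constructor
  · rintro ⟨i, j, hij, hi | hi, hj | hj⟩
    · rcases hcov hij with h | h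
      exacts [⟨i, hi, h⟩, ⟨j, hj, h⟩]
    · exact ⟨i, hi, j, hj, hij.symm⟩
    · exact ⟨j, hj, i, hi, hij⟩
    · exact absurd hij (hA hi hj hij.ne)
  · rintro ⟨v, hv, a, ha, hav⟩
    exact ⟨a, v, hav, Or.inr ha, Or.inl hv⟩

end SimpleGraph

open SimpleGraph Finset

section EdgeIdeal

variable {K V : Type*} [Field K] {G : SimpleGraph V}

theorem mem_edgeIdeal_iff {p : MvPolynomial V K} :
    p ∈ edgeIdeal K G ↔ ∀ m ∈ p.support, ∃ i j, G.Adj i j ∧ m i ≠ 0 ∧ m j ≠ 0 := by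
  classical
  have hspan : edgeIdeal K G = Ideal.span ((fun a => monomial a (1 : K)) ''
      {a | ∃ i j, G.Adj i j ∧ a = Finsupp.single i 1 + Finsupp.single j 1}) := by
    have hXX : ∀ i j : V, (X i * X j : MvPolynomial V K) =
        monomial (Finsupp.single i 1 + Finsupp.single j 1) 1 := by
      simp [X, monomial_mul]
    rw [edgeIdeal]
    congr 1
    ext q
    constructor
    · rintro ⟨i, j, hij, rfl⟩
      exact ⟨_, ⟨i, j, hij, rfl⟩, (hXX i j).symm⟩
    · rintro ⟨_, ⟨i, j, hij, rfl⟩, rfl⟩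
      exact ⟨i, j, hij, (hXX i j).symm⟩
  rw [hspan, mem_ideal_span_monomial_image]
  refine forall₂_congr fun m _ => ⟨?_, ?_⟩
  · rintro ⟨_, ⟨i, j, hij, rfl⟩, hle⟩
    exact ⟨i, j, hij, (Finsupp.single_one_add_single_one_le_iff hij.ne m).1 hle⟩
  · rintro ⟨i, j, hij, hm⟩
    exact ⟨_, ⟨i, j, hij, rfl⟩, (Finsupp.single_one_add_single_one_le_iff hij.ne m).2 hm⟩

theorem colon_edgeIdeal_prod_X {A : Finset V} (hA : G.IsIndepSet A)
    (hcov : G.IsVertexCover (G.neighborhood A)) :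
    (edgeIdeal K G).colon (Ideal.span {∏ a ∈ A, (X a : MvPolynomial V K)}) =
      Ideal.span (X '' G.neighborhood A) := by
  classical
  set e : V →₀ ℕ := Finsupp.indicator A fun _ _ => 1
  have he : ∀ m : V →₀ ℕ, {v | (m + e) v ≠ 0} = {v | m v ≠ 0} ∪ A := by
    intro m
    ext v
    by_cases hv : v ∈ A <;> simp [e, Finsupp.indicator_apply, hv]
  have hprod : ∏ a ∈ A, (X a : MvPolynomial V K) = monomial e 1 := by
    simpa using prod_X_pow (R := K) (fun _ => 1) A
  ext g
  rw [hprod, Ideal.mem_colon_span_singleton, mem_edgeIdeal_iff, mem_ideal_span_X_image]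
  constructor
  · intro h m hm
    have hme : m + e ∈ (g * monomial e 1).support := by
      rwa [mem_support_iff, coeff_mul_monomial, mul_one, ← mem_support_iff]
    obtain ⟨i, j, hij, hi, hj⟩ := h _ hme
    have : ∃ i j, G.Adj i j ∧ i ∈ {v | m v ≠ 0} ∪ A ∧ j ∈ {v | m v ≠ 0} ∪ A := by
      rw [← he]; exact ⟨i, j, hij, hi, hj⟩
    obtain ⟨v, hv, hvA⟩ := (exists_adj_mem_union_iff hA hcov _).1 this
    exact ⟨v, hvA, hv⟩
  · intro h m hm
    rw [mem_support_iff, coeff_mul_monomial'] at hm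
    split_ifs at hm with hle
    · obtain ⟨v, hvA, hv⟩ := h (m - e) (mem_support_iff.mpr (by simpa using hm))
      obtain ⟨i, j, hij, hi, hj⟩ := (exists_adj_mem_union_iff hA hcov {v | (m - e) v ≠ 0}).2
        ⟨v, hv, hvA⟩
      have hm : ∀ x ∈ {v | (m - e) v ≠ 0} ∪ ↑A, m x ≠ 0 := by
        rintro x (hx | hx)
        · simp only [Set.mem_ofPred_eq, Finsupp.tsub_apply] at hx
          omega
        · have := hle x
          simp only [e, Finsupp.indicator_apply, Finset.mem_coe.mp hx, dite_true] at this
          omega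
      exact ⟨i, j, hij, hm i hi, hm j hj⟩
    · exact absurd rfl hm

theorem exists_isVertexCover_neighborhood_of_isPrime_colon {f : MvPolynomial V K} {k : ℕ}
    (hf : f.IsHomogeneous k) (hprime : ((edgeIdeal K G).colon (Ideal.span {f})).IsPrime) :
    ∃ B : Finset V, #B ≤ k ∧ G.IsVertexCover (G.neighborhood B) := by
  classical
  have hfI : f ∉ edgeIdeal K G := fun hf =>
    hprime.ne_top ((Submodule.colon_eq_top_iff_subset _).2 (by simpa using hf))
  rw [mem_edgeIdeal_iff] at hfI
  push Not at hfI
  obtain ⟨a, haf, ha⟩ := hfI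
  have hnbhd : ∀ w, X w ∈ (edgeIdeal K G).colon (Ideal.span {f}) →
      w ∈ G.neighborhood a.support := by
    intro w hw
    rw [Ideal.mem_colon_span_singleton, mul_comm, mem_edgeIdeal_iff] at hw
    obtain ⟨u, v, huv, hu, hv⟩ := hw (a + Finsupp.single w 1) (by simpa using haf)
    have hcases : ∀ x, (a + Finsupp.single w 1 : V →₀ ℕ) x ≠ 0 → x = w ∨ x ∈ a.support := by
      intro x hx
      by_cases hxw : x = w
      · exact Or.inl hxw
      · exact Or.inr (by simpa [Finsupp.single_apply, Ne.symm hxw] using hx)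
    rcases hcases u hu with rfl | hua <;> rcases hcases v hv with rfl | hva
    · exact (huv.ne rfl).elim
    · exact ⟨v, hva, huv.symm⟩
    · exact ⟨u, hua, huv⟩
    · exact absurd (ha u v huv (Finsupp.mem_support_iff.mp hua)) (Finsupp.mem_support_iff.mp hva)
  refine ⟨a.support, ?_, fun i j hij => ?_⟩
  · have hdeg : a.degree = k := by
      rw [Finsupp.degree_eq_weight_one]
      exact hf (mem_support_iff.mp haf)
    rw [← hdeg, Finsupp.degree_apply]
    simpa using Finset.card_nsmul_le_sum a.support a 1
      (fun i hi => Nat.one_le_iff_ne_zero.mpr (Finsupp.mem_support_iff.mp hi))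
  · have hXX : X i * X j ∈ (edgeIdeal K G).colon (Ideal.span {f}) :=
      Ideal.le_colon (Ideal.subset_span ⟨i, j, hij, rfl⟩)
    exact (hprime.mem_or_mem hXX).imp (hnbhd i) (hnbhd j)

theorem vNumber_edgeIdeal_eq_card {A : Finset V} (hA : G.IsIndepSet A)
    (hcov : G.IsVertexCover (G.neighborhood A))
    (hmin : ∀ B : Finset V, G.IsVertexCover (G.neighborhood B) → #A ≤ #B) :
    vNumber (edgeIdeal K G) = #A := by
  refine IsLeast.csInf_eq ⟨⟨∏ a ∈ A, X a, ?_, ?_⟩, ?_⟩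
  · simpa using IsHomogeneous.prod A (fun a => (X a : MvPolynomial V K)) 1
      (fun a _ => isHomogeneous_X K a)
  · rw [Ideal.colon_span_singleton_mem_associatedPrimes_iff, colon_edgeIdeal_prod_X hA hcov]
    exact isPrime_span_X_image _
  · rintro k ⟨f, hf, hass⟩
    rw [Ideal.colon_span_singleton_mem_associatedPrimes_iff] at hass
    obtain ⟨B, hBk, hB⟩ := exists_isVertexCover_neighborhood_of_isPrime_colon hf hass
    exact (hmin B hB).trans hBk

end EdgeIdeal

namespace SimpleGraph

theorem card_edgeFinset_le_of_isVertexCover_neighborhood {V : Type*} {G : SimpleGraph V}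
    [Fintype V] [DecidableEq V] [DecidableRel G.Adj] {d : ℕ} (hdeg : ∀ v, G.degree v ≤ d)
    {B : Finset V} (hB : G.IsVertexCover (G.neighborhood B)) :
    #G.edgeFinset ≤ d * d * #B := by
  have hsub : G.edgeFinset ⊆
      B.biUnion fun b => (G.neighborFinset b).biUnion fun v => G.incidenceFinset v := by
    intro e he
    induction e using Sym2.ind with
    | h i j =>
      rw [mem_edgeFinset, mem_edgeSet] at he
      simp only [mem_biUnion, mem_neighborFinset, mem_incidenceFinset]
      rcases hB he with ⟨b, hb, hbi⟩ | ⟨b, hb, hbj⟩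
      · exact ⟨b, hb, i, hbi, he, Sym2.mem_mk_left i j⟩
      · exact ⟨b, hb, j, hbj, he, Sym2.mem_mk_right i j⟩
  calc #G.edgeFinset
      ≤ ∑ b ∈ B, ∑ v ∈ G.neighborFinset b, #(G.incidenceFinset v) :=
        (card_le_card hsub).trans (card_biUnion_le.trans (sum_le_sum fun _ _ => card_biUnion_le))
    _ ≤ ∑ _b ∈ B, d * d := by
        refine sum_le_sum fun b _ => ?_
        calc ∑ v ∈ G.neighborFinset b, #(G.incidenceFinset v)
            = ∑ v ∈ G.neighborFinset b, G.degree v :=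
              sum_congr rfl fun v _ => card_incidenceFinset_eq_degree G v
          _ ≤ #(G.neighborFinset b) • d := sum_le_card_nsmul _ _ d fun v _ => hdeg v
          _ ≤ d * d := by
              rw [smul_eq_mul, card_neighborFinset_eq_degree]
              exact Nat.mul_le_mul_right d (hdeg b)
    _ = d * d * #B := by rw [sum_const, smul_eq_mul, mul_comm]

instance (n : ℕ) : DecidableRel (pathGraph n).Adj := fun _ _ => decidable_of_iff' _ pathGraph_adj

theorem cycleGraph_adj_iff_val {n : ℕ} {u v : Fin (n + 2)} :
    (cycleGraph (n + 2)).Adj u v ↔ u.val + 1 = v.val ∨ v.val + 1 = u.val ∨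
      (u.val = 0 ∧ v.val = n + 1) ∨ (v.val = 0 ∧ u.val = n + 1) := by
  have hu := u.isLt
  have hv := v.isLt
  rw [cycleGraph_adj']
  rcases le_or_gt v u with h | h
  · rw [Fin.sub_val_of_le h]
    rcases h.lt_or_eq with h' | rfl
    · rw [Fin.coe_sub_iff_lt.mpr h']
      omega
    · simp only [Nat.sub_self, sub_self, Fin.val_zero]
      omega
  · rw [Fin.sub_val_of_le h.le, Fin.coe_sub_iff_lt.mpr h]
    omega

theorem card_edgeFinset_cycleGraph (n : ℕ) : #(cycleGraph (n + 3)).edgeFinset = n + 3 := by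
  have := (cycleGraph (n + 3)).sum_degrees_eq_twice_card_edges
  simp only [cycleGraph_degree_three_le, sum_const, card_univ, Fintype.card_fin,
    smul_eq_mul] at this
  omega

theorem le_card_edgeFinset_pathGraph (n : ℕ) : n ≤ #(pathGraph (n + 1)).edgeFinset := by
  have hinj : Function.Injective fun i : Fin n => s(i.castSucc, i.succ) := by
    intro i j hij
    simp only [Sym2.eq_iff, Fin.ext_iff, Fin.val_castSucc, Fin.val_succ] at hij
    exact Fin.ext (by omega)
  calc n = #((univ : Finset (Fin n)).image fun i => s(i.castSucc, i.succ)) := by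
        rw [card_image_of_injective _ hinj, card_univ, Fintype.card_fin]
    _ ≤ _ := by
        refine card_le_card fun e he => ?_
        obtain ⟨i, -, rfl⟩ := mem_image.mp he
        rw [mem_edgeFinset, mem_edgeSet, pathGraph_adj]
        simp

theorem degree_cycleGraph_le_two {n : ℕ} (v : Fin (n + 2)) :
    (cycleGraph (n + 2)).degree v ≤ 2 := by
  rw [cycleGraph_degree_two_le]
  exact card_le_two

theorem degree_pathGraph_le_two {n : ℕ} (v : Fin (n + 2)) : (pathGraph (n + 2)).degree v ≤ 2 :=
  (degree_le_of_le pathGraph_le_cycleGraph).trans (degree_cycleGraph_le_two v)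

theorem exists_isIndepSet_isVertexCover_neighborhood_cycleGraph (n : ℕ) :
    ∃ A : Finset (Fin (n + 3)), #A = (n + 6) / 4 ∧ (cycleGraph (n + 3)).IsIndepSet A ∧
      (cycleGraph (n + 3)).IsVertexCover ((cycleGraph (n + 3)).neighborhood A) := by
  -- `0, 4, 8, …`, the last one moved back to `n + 1` so as not to be adjacent to `0`
  let g : ℕ → Fin (n + 3) := fun j => ⟨min (4 * j) (n + 1), by omega⟩
  refine ⟨(range ((n + 6) / 4)).image g, ?_, ?_, ?_⟩
  · rw [card_image_of_injOn, card_range]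
    intro j₁ h₁ j₂ h₂ h
    simp only [coe_range, Set.mem_Iio, g, Fin.ext_iff] at h₁ h₂ h
    omega
  · intro x hx y hy _ hxy
    simp only [coe_image, coe_range, Set.mem_image, Set.mem_Iio] at hx hy
    obtain ⟨j₁, h₁, rfl⟩ := hx
    obtain ⟨j₂, h₂, rfl⟩ := hy
    simp only [cycleGraph_adj_iff_val, g] at hxy
    omega
  · intro v w hvw
    rw [cycleGraph_adj_iff_val] at hvw
    simp only [coe_image, coe_range, mem_neighborhood_image, Set.mem_Iio, ← exists_or,
      ← and_or_left, cycleGraph_adj_iff_val, g]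
    by_cases hc : (min v.val w.val + 2) / 4 < (n + 6) / 4
    · exact ⟨_, hc, by omega⟩
    -- the remaining edges contain `n + 2`, a neighbour of `0`
    · exact ⟨0, by omega, by omega⟩

theorem exists_isIndepSet_isVertexCover_neighborhood_pathGraph (n : ℕ) :
    ∃ A : Finset (Fin (n + 2)), #A = (n + 4) / 4 ∧ (pathGraph (n + 2)).IsIndepSet A ∧
      (pathGraph (n + 2)).IsVertexCover ((pathGraph (n + 2)).neighborhood A) := by
  let g : ℕ → Fin (n + 2) := fun j => ⟨min (4 * j + 2) n, by omega⟩
  refine ⟨(range ((n + 4) / 4)).image g, ?_, ?_, ?_⟩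
  · rw [card_image_of_injOn, card_range]
    intro j₁ h₁ j₂ h₂ h
    simp only [coe_range, Set.mem_Iio, g, Fin.ext_iff] at h₁ h₂ h
    omega
  · intro x hx y hy _ hxy
    simp only [coe_image, coe_range, Set.mem_image, Set.mem_Iio] at hx hy
    obtain ⟨j₁, h₁, rfl⟩ := hx
    obtain ⟨j₂, h₂, rfl⟩ := hy
    simp only [pathGraph_adj, g] at hxy
    omega
  · intro v w hvw
    rw [pathGraph_adj] at hvw
    simp only [coe_image, coe_range, mem_neighborhood_image, Set.mem_Iio, ← exists_or,
      ← and_or_left, pathGraph_adj, g]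
    exact ⟨min v.val w.val / 4, by omega, by omega⟩

end SimpleGraph

theorem vNumber_edgeIdeal_cycleGraph (K : Type*) [Field K] (n : ℕ) :
    vNumber (edgeIdeal K (cycleGraph (n + 3))) = (n + 6) / 4 := by
  obtain ⟨A, hcard, hA, hcov⟩ := exists_isIndepSet_isVertexCover_neighborhood_cycleGraph n
  rw [← hcard]
  refine vNumber_edgeIdeal_eq_card hA hcov fun B hB => ?_
  have := card_edgeFinset_le_of_isVertexCover_neighborhood
    (fun v => (cycleGraph_degree_three_le (v := v)).le) hB
  rw [card_edgeFinset_cycleGraph] at this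
  omega

theorem vNumber_edgeIdeal_pathGraph (K : Type*) [Field K] (n : ℕ) :
    vNumber (edgeIdeal K (pathGraph (n + 2))) = (n + 4) / 4 := by
  obtain ⟨A, hcard, hA, hcov⟩ := exists_isIndepSet_isVertexCover_neighborhood_pathGraph n
  rw [← hcard]
  refine vNumber_edgeIdeal_eq_card hA hcov fun B hB => ?_
  have := (le_card_edgeFinset_pathGraph (n + 1)).trans
    (card_edgeFinset_le_of_isVertexCover_neighborhood degree_pathGraph_le_two hB)
  omega

/-- for n ≥ 5, v(C_n) = v(P_{n-3}) + 1. -/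
theorem vNumber_cycle_eq_vNumber_path {K : Type*} [Field K] (n : ℕ) (hn : 5 ≤ n) :
    vNumber (edgeIdeal K (SimpleGraph.cycleGraph n)) =
      vNumber (edgeIdeal K (SimpleGraph.pathGraph (n - 3))) + 1 := by
  obtain ⟨m, rfl⟩ : ∃ m, n = m + 2 + 3 := ⟨n - 5, by omega⟩
  rw [Nat.add_sub_cancel, vNumber_edgeIdeal_cycleGraph, vNumber_edgeIdeal_pathGraph]
  omega
end
end

section
/- Let I ⊆ S = K[x_1,…,x_t] be an 𝔪-primary monomial ideal and for each i = 1,…,t let a_i ≥ 1 be such that x_i^{a_i} ∈ G(I). Then v(I) ≤ (a_1 + a_2 + ⋯ + a_t) − t. -/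
/-!
Since `x_i ^ a_i ∈ I`, every monomial `x^c ∉ I` has `c_i < a_i` for all `i`. So there are finitely
many such monomials, and one of them, `x^c`, is maximal for divisibility: `x_i * x^c ∈ I` for all
`i`. Then `𝔪 ≤ (I : x^c) ≠ ⊤` forces `(I : x^c) = 𝔪`, a prime and hence associated prime of `S/I`,
and `v(I) ≤ deg x^c = ∑ c_i ≤ ∑ (a_i - 1)`.
-/

open MvPolynomial

noncomputable section

namespace Ideal

variable {R : Type*} [CommRing R] {I : Ideal R} {f : R}

theorem colon_span_singleton_mem_associatedPrimes (h : (I.colon (span {f})).IsPrime) :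
    I.colon (span {f}) ∈ associatedPrimes R (R ⧸ I) := by
  refine ⟨h, Quotient.mk I f, ?_⟩
  have hann : Submodule.colon (⊥ : Submodule R (R ⧸ I)) {Quotient.mk I f} =
      I.colon (span {f}) := by
    ext r
    rw [mem_colon_span_singleton, Submodule.mem_colon_singleton, Submodule.mem_bot,
      Algebra.smul_def, Quotient.algebraMap_eq, ← map_mul, Quotient.eq_zero_iff_mem]
  rw [hann, h.radical]

theorem colon_span_singleton_eq_of_isMaximal {M : Ideal R} [hM : M.IsMaximal] (hf : f ∉ I)
    (hle : M ≤ I.colon (span {f})) : I.colon (span {f}) = M := by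
  refine (hM.eq_of_le ?_ hle).symm
  rwa [Ne, eq_top_iff_one, mem_colon_span_singleton, one_mul]

end Ideal

namespace MvPolynomial

variable {σ K : Type*} [Field K]

theorem maxIdeal_eq_ker_constantCoeff :
    maxIdeal K σ = RingHom.ker (constantCoeff : MvPolynomial σ K →+* K) := by
  ext p
  rw [maxIdeal, ← Set.image_univ, mem_ideal_span_X_image, RingHom.mem_ker]
  simp only [constantCoeff_eq, Set.mem_univ, true_and]
  constructor
  · intro h
    by_contra h0
    obtain ⟨i, hi⟩ := h 0 (mem_support_iff.mpr h0)
    exact hi rfl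
  · intro h m hm
    exact Finsupp.ne_iff.mp (ne_of_mem_of_not_mem hm (notMem_support_iff.mpr h))

instance maxIdeal_isMaximal : (maxIdeal K σ).IsMaximal := by
  rw [maxIdeal_eq_ker_constantCoeff]
  exact RingHom.ker_isMaximal_of_surjective _ fun k => ⟨C k, constantCoeff_C σ k⟩

variable {I : Ideal (MvPolynomial σ K)} {c : σ →₀ ℕ}

theorem vNumber_le_degree_of_forall_X_mul_mem (hc : monomial c (1 : K) ∉ I)
    (hX : ∀ i, X i * monomial c (1 : K) ∈ I) : vNumber I ≤ c.degree := by
  have hle : maxIdeal K σ ≤ I.colon (Ideal.span {monomial c (1 : K)}) := by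
    rw [maxIdeal, Ideal.span_le, Set.range_subset_iff]
    exact fun i => Ideal.mem_colon_span_singleton.mpr (hX i)
  have hcolon := Ideal.colon_span_singleton_eq_of_isMaximal hc hle
  refine Nat.sInf_le ⟨monomial c 1, isHomogeneous_monomial 1 rfl, ?_⟩
  exact Ideal.colon_span_singleton_mem_associatedPrimes (hcolon ▸ inferInstance)

theorem lt_of_monomial_notMem {i : σ} {n : ℕ} (hn : monomial (Finsupp.single i n) (1 : K) ∈ I)
    (hc : monomial c (1 : K) ∉ I) : c i < n := by
  by_contra! h
  have hle : Finsupp.single i n ≤ c := Finsupp.single_le_iff.mpr h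
  apply hc
  rw [← tsub_add_cancel_of_le hle, ← one_mul (1 : K), ← monomial_mul]
  exact I.mul_mem_left _ hn

theorem finite_setOf_monomial_notMem [Finite σ] {a : σ → ℕ}
    (ha : ∀ i, monomial (Finsupp.single i (a i)) (1 : K) ∈ I) :
    {c : σ →₀ ℕ | monomial c (1 : K) ∉ I}.Finite := by
  refine ((Set.Finite.pi' fun i => Set.finite_Iio (a i)).preimage
    DFunLike.coe_injective.injOn).subset fun c hc i => ?_
  exact lt_of_monomial_notMem (ha i) hc

theorem X_mul_monomial_mem_of_maximal (hc : Maximal (fun c => monomial c (1 : K) ∉ I) c)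
    (i : σ) : X i * monomial c (1 : K) ∈ I := by
  rw [X, monomial_mul, one_mul]
  by_contra h
  have := hc.2 h le_add_self i
  simp at this

end MvPolynomial

theorem Finsupp.degree_add_card_le_sum {σ : Type*} [Fintype σ] {c : σ →₀ ℕ} {a : σ → ℕ}
    (h : ∀ i, c i < a i) : c.degree + Fintype.card σ ≤ ∑ i, a i := by
  rw [degree_eq_sum, ← Finset.card_univ, Finset.card_eq_sum_ones, ← Finset.sum_add_distrib]
  exact Finset.sum_le_sum fun i _ => h i

theorem vNumber_le_sum_pure_powers_general {K : Type*} [Field K] (t : ℕ)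
    (I : Ideal (MvPolynomial (Fin t) K))
    (hprim : I.radical = maxIdeal K (Fin t))
    (a : Fin t → ℕ)
    (hgen : ∀ i, Finsupp.single i (a i) ∈ minimalGenerators I) :
    vNumber I ≤ (∑ i, a i) - t := by
  have hI : (1 : MvPolynomial (Fin t) K) ∉ I := by
    rw [← Ideal.eq_top_iff_one]
    rintro rfl
    exact Ideal.IsMaximal.ne_top inferInstance (hprim.symm.trans (Ideal.radical_top _))
  have hpow i : monomial (Finsupp.single i (a i)) (1 : K) ∈ I := (hgen i).1
  obtain ⟨c, hc⟩ := (finite_setOf_monomial_notMem hpow).exists_maximal ⟨0, hI⟩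
  have hbound := Finsupp.degree_add_card_le_sum fun i => lt_of_monomial_notMem (hpow i) hc.prop
  rw [Fintype.card_fin] at hbound
  calc vNumber I ≤ c.degree := vNumber_le_degree_of_forall_X_mul_mem hc.prop
        (X_mul_monomial_mem_of_maximal hc)
    _ ≤ (∑ i, a i) - t := by omega

/-- if x_i^{a_i} ∈ G(I) for each i, then v(I) ≤ (∑ a_i) - t. -/
theorem vNumber_le_sum_pure_powers {K : Type*} [Field K] (t : ℕ)
    (I : Ideal (MvPolynomial (Fin t) K))
    (hmon : IsMonomialIdeal I) (hprim : I.radical = maxIdeal K (Fin t))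
    (a : Fin t → ℕ) (ha : ∀ i, 1 ≤ a i)
    (hgen : ∀ i, Finsupp.single i (a i) ∈ minimalGenerators I) :
    vNumber I ≤ (∑ i, a i) - t :=
  vNumber_le_sum_pure_powers_general t I hprim a hgen
end
end
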